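/- arXiv:math/0006227 — 7 statements merged into one kernel-verified Lean document; each statement's English description precedes it below -/
import Mathlib

section
/- Let α and s be nonzero complex numbers with s not a root of unity, and let λ be a partition with conjugate partition λ^∨. Define d'_λ(i,j) = λ_i + λ_j − i − j + 1 if i < j and d'_λ(i,j) = −λ^∨_i − λ^∨_j + i + j − 1 if i ≥ j. Then Wenzl's quantum dimension evaluated at the parameters (α², s²) satisfies ⟨λ⟩_{α²,s²} = ∏_{(i,j)∈λ} (α s^{d_λ(i,j)} − α^{−1} s^{−d_λ(i,j)})/(s^{hl(i,j)} − s^{−hl(i,j)}) · ∏_{(i,j)∈λ} (α s^{d'_λ(i,j)} + α^{−1} s^{−d'_λ(i,j)})/(s^{hl(i,j)} + s^{−hl(i,j)}), where both products run over all cells (i,j) of λ. -/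
open Finset

/-- Quantum integer `[m] = (s^m - s^{-m})/(s - s⁻¹)`. -/
noncomputable def qint (s : ℂ) (m : ℤ) : ℂ := (s ^ m - s ^ (-m)) / (s - s⁻¹)

/-- Quantum integer `[m]_α = (α s^m - α⁻¹ s^{-m})/(s - s⁻¹)`. -/
noncomputable def qintA (α s : ℂ) (m : ℤ) : ℂ := (α * s ^ m - α⁻¹ * s ^ (-m)) / (s - s⁻¹)

/-- The cells `(i,j)` (row `i`, column `j`, both 1-based) of the Young diagram of
the partition `lam`, assuming all parts of index `> N` vanish. -/
def cells (lam : ℕ → ℕ) (N : ℕ) : Finset (ℕ × ℕ) :=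
  (Finset.Icc 1 N ×ˢ Finset.Icc 1 (lam 1)).filter (fun p => p.2 ≤ lam p.1)

/-- Hook length `hl(i,j) = λ_i + λ^∨_j - i - j + 1`. -/
def hookl (lam lamV : ℕ → ℕ) (p : ℕ × ℕ) : ℤ :=
  (lam p.1 : ℤ) + (lamV p.2 : ℤ) - p.1 - p.2 + 1

/-- `d_λ(i,j)`: equals `λ_i + λ_j - i - j + 1` if `i ≤ j`, and
`-λ^∨_i - λ^∨_j + i + j - 1` if `i > j`. -/
def dcell (lam lamV : ℕ → ℕ) (p : ℕ × ℕ) : ℤ :=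
  if p.1 ≤ p.2 then (lam p.1 : ℤ) + (lam p.2 : ℤ) - p.1 - p.2 + 1
  else -(lamV p.1 : ℤ) - (lamV p.2 : ℤ) + p.1 + p.2 - 1

/-- `d'_λ(i,j)`: equals `λ_i + λ_j - i - j + 1` if `i < j`, and
`-λ^∨_i - λ^∨_j + i + j - 1` if `i ≥ j`. -/
def dcell' (lam lamV : ℕ → ℕ) (p : ℕ × ℕ) : ℤ :=
  if p.1 < p.2 then (lam p.1 : ℤ) + (lam p.2 : ℤ) - p.1 - p.2 + 1
  else -(lamV p.1 : ℤ) - (lamV p.2 : ℤ) + p.1 + p.2 - 1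

/-- Wenzl's quantum dimension
`⟨λ⟩_{α,s} = ∏_{(j,j)∈λ} ([λ_j - λ^∨_j]_α + [hl(j,j)])/[hl(j,j)] ·
∏_{(i,j)∈λ, i≠j} [d_λ(i,j)]_α/[hl(i,j)]`. -/
noncomputable def wenzl (α s : ℂ) (lam lamV : ℕ → ℕ) (N : ℕ) : ℂ :=
  (∏ p ∈ (cells lam N).filter (fun p => p.1 = p.2),
      (qintA α s ((lam p.1 : ℤ) - (lamV p.1 : ℤ)) + qint s (hookl lam lamV p)) /
        qint s (hookl lam lamV p)) *
  ∏ p ∈ (cells lam N).filter (fun p => p.1 ≠ p.2),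
      qintA α s (dcell lam lamV p) / qint s (hookl lam lamV p)

/-!
Every factor of Wenzl's product at `(α², s²)` splits into a "minus" and a "plus" factor, because
`(α s^m - α⁻¹ s^{-m}) (α s^n + α⁻¹ s^{-n}) = α² s^{2c} - α⁻² s^{-2c} + s^{2k} - s^{-2k}`
whenever `m + n = 2c` and `m - n = 2k`, and `s^{2h} - s^{-2h} = (s^h - s^{-h}) (s^h + s^{-h})`.
Off the diagonal `d'_λ = d_λ`, so `k = 0`; on a diagonal cell `d_λ + d'_λ = 2 (λ_j - λ^∨_j)` and
`d_λ - d'_λ = 2 hl`, which is exactly the shape of Wenzl's diagonal factor.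
-/

lemma sq_zpow_eq_zpow_mul (s : ℂ) (k : ℤ) : (s ^ 2) ^ k = s ^ (2 * k) := by
  rw [zpow_mul, zpow_ofNat]

lemma qint_zero (s : ℂ) : qint s 0 = 0 := by
  simp [qint]

lemma qint_sq (s : ℂ) (h : ℤ) :
    qint (s ^ 2) h = (s ^ h - s ^ (-h)) * (s ^ h + s ^ (-h)) / (s ^ 2 - (s ^ 2)⁻¹) := by
  rw [qint, sq_zpow_eq_zpow_mul, sq_zpow_eq_zpow_mul, mul_comm 2 h, mul_comm 2 (-h),
    zpow_mul, zpow_mul, zpow_two, zpow_two]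
  ring

lemma qintA_sq_add_qint_sq {α s : ℂ} (hα : α ≠ 0) (hs : s ≠ 0) {c k m n : ℤ}
    (hc : m + n = 2 * c) (hk : m - n = 2 * k) :
    qintA (α ^ 2) (s ^ 2) c + qint (s ^ 2) k =
      (α * s ^ m - α⁻¹ * s ^ (-m)) * (α * s ^ n + α⁻¹ * s ^ (-n)) / (s ^ 2 - (s ^ 2)⁻¹) := by
  rw [qintA, qint, ← add_div, sq_zpow_eq_zpow_mul, sq_zpow_eq_zpow_mul, sq_zpow_eq_zpow_mul,
    sq_zpow_eq_zpow_mul, show 2 * c = m + n by omega, show 2 * -c = -m + -n by omega,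
    show 2 * k = m + -n by omega, show 2 * -k = -m + n by omega]
  simp only [zpow_add₀ hs]
  field_simp
  ring

lemma sq_sub_inv_sq_ne_zero {s : ℂ} (hs : s ≠ 0) (hs4 : s ^ 4 ≠ 1) : s ^ 2 - (s ^ 2)⁻¹ ≠ 0 := by
  rw [sub_ne_zero]
  intro h
  apply hs4
  field_simp at h
  linear_combination h

lemma qintA_sq_add_qint_sq_div_qint_sq {α s : ℂ} (hα : α ≠ 0) (hs : s ≠ 0) (hs4 : s ^ 4 ≠ 1)
    {c k h m n : ℤ} (hc : m + n = 2 * c) (hk : m - n = 2 * k) :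
    (qintA (α ^ 2) (s ^ 2) c + qint (s ^ 2) k) / qint (s ^ 2) h =
      (α * s ^ m - α⁻¹ * s ^ (-m)) / (s ^ h - s ^ (-h)) *
        ((α * s ^ n + α⁻¹ * s ^ (-n)) / (s ^ h + s ^ (-h))) := by
  rw [qintA_sq_add_qint_sq hα hs hc hk, qint_sq,
    div_div_div_cancel_right₀ (sq_sub_inv_sq_ne_zero hs hs4), mul_div_mul_comm]

section Cells

variable (lam lamV : ℕ → ℕ) {p : ℕ × ℕ}

lemma dcell'_eq_dcell (hp : p.1 ≠ p.2) : dcell' lam lamV p = dcell lam lamV p := by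
  unfold dcell dcell'
  split_ifs <;> omega

lemma dcell_add_dcell' (hp : p.1 = p.2) :
    dcell lam lamV p + dcell' lam lamV p = 2 * ((lam p.1 : ℤ) - lamV p.1) := by
  simp only [dcell, dcell', hp, le_refl, lt_irrefl, if_true, if_false]
  ring

lemma dcell_sub_dcell' (hp : p.1 = p.2) :
    dcell lam lamV p - dcell' lam lamV p = 2 * hookl lam lamV p := by
  simp only [dcell, dcell', hookl, hp, le_refl, lt_irrefl, if_true, if_false]
  ring

end Cells

theorem wenzl_formula_two_general (α s : ℂ) (hα : α ≠ 0) (hs : s ≠ 0)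
    (hroot : ∀ m : ℕ, 0 < m → s ^ m ≠ 1)
    (lam lamV : ℕ → ℕ) (N : ℕ) :
    wenzl (α ^ 2) (s ^ 2) lam lamV N =
      (∏ p ∈ cells lam N,
        (α * s ^ dcell lam lamV p - α⁻¹ * s ^ (-dcell lam lamV p)) /
          (s ^ hookl lam lamV p - s ^ (-hookl lam lamV p))) *
      ∏ p ∈ cells lam N,
        (α * s ^ dcell' lam lamV p + α⁻¹ * s ^ (-dcell' lam lamV p)) /
          (s ^ hookl lam lamV p + s ^ (-hookl lam lamV p)) := by
  have hs4 : s ^ 4 ≠ 1 := hroot 4 (by norm_num)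
  rw [wenzl, ← prod_mul_distrib, ← prod_filter_mul_prod_filter_not (cells lam N) fun p => p.1 = p.2]
  congr 1
  · refine prod_congr rfl fun p hp => ?_
    have hdiag := (mem_filter.1 hp).2
    exact qintA_sq_add_qint_sq_div_qint_sq hα hs hs4 (dcell_add_dcell' lam lamV hdiag)
      (dcell_sub_dcell' lam lamV hdiag)
  · refine prod_congr rfl fun p hp => ?_
    rw [dcell'_eq_dcell lam lamV (mem_filter.1 hp).2, ← add_zero (qintA _ _ _), ← qint_zero]
    exact qintA_sq_add_qint_sq_div_qint_sq hα hs hs4 (two_mul _).symm (by simp)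

/-- Wenzl's quantum dimension evaluated at `(α², s²)` equals
`∏_{(i,j)∈λ} (α s^{d_λ(i,j)} - α⁻¹ s^{-d_λ(i,j)})/(s^{hl(i,j)} - s^{-hl(i,j)}) ·
 ∏_{(i,j)∈λ} (α s^{d'_λ(i,j)} + α⁻¹ s^{-d'_λ(i,j)})/(s^{hl(i,j)} + s^{-hl(i,j)})`. -/
theorem wenzl_formula_two (α s : ℂ) (hα : α ≠ 0) (hs : s ≠ 0)
    (hroot : ∀ m : ℕ, 0 < m → s ^ m ≠ 1)
    (lam lamV : ℕ → ℕ) (N : ℕ) (hN : ∀ i, N < i → lam i = 0)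
    (hconj : ∀ i j : ℕ, 1 ≤ i → 1 ≤ j → (j ≤ lam i ↔ i ≤ lamV j)) :
    wenzl (α ^ 2) (s ^ 2) lam lamV N =
      (∏ p ∈ cells lam N,
        (α * s ^ dcell lam lamV p - α⁻¹ * s ^ (-dcell lam lamV p)) /
          (s ^ hookl lam lamV p - s ^ (-hookl lam lamV p))) *
      ∏ p ∈ cells lam N,
        (α * s ^ dcell' lam lamV p + α⁻¹ * s ^ (-dcell' lam lamV p)) /
          (s ^ hookl lam lamV p + s ^ (-hookl lam lamV p)) :=
  wenzl_formula_two_general α s hα hs hroot lam lamV N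
end

section
/- Let α and s be nonzero complex numbers with s not a root of unity, and let λ be a partition with conjugate partition λ^∨. Then Wenzl's quantum dimension satisfies the symmetries ⟨λ⟩_{α,s} = ⟨λ⟩_{−α,−s} = ⟨λ⟩_{α^{−1},s^{−1}} = ⟨λ^∨⟩_{α,−s^{−1}}. -/
open Finset

/-!
Each substitution multiplies a quantum integer by a sign: `[m]_{-α,-s} = (-1)^m [m]_{α,s}`,
`[m]_{-s} = (-1)^{m+1} [m]_s`, `[m]_{α⁻¹,s⁻¹} = [m]_{α,s}` and `[-m]_{α,-s⁻¹} = (-1)^m [m]_{α,s}`,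
while transposing the diagram swaps `hl` and negates `d` cellwise. On a diagonal factor the
signs cancel, since `λ_j - λ^∨_j ≡ hl(j,j) + 1 (mod 2)`. An off-diagonal cell `(i,j)` picks up
`(-1)^{d+hl+1} = (-1)^{λ_k+λ^∨_k+1}` with `k = max(i,j)`, and there are `2(k-1)` such cells if
`(k,k) ∈ λ` and `λ_k + λ^∨_k` otherwise, so the signs multiply to `1`.
-/

section Sign

variable {K : Type*} [Field K]

theorem neg_one_zpow_neg (m : ℤ) : (-1 : K) ^ (-m) = (-1) ^ m := by
  rw [zpow_neg, ← inv_zpow, inv_neg_one]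

theorem neg_one_zpow_eq_of_even_sub {m n : ℤ} (h : Even (m - n)) : (-1 : K) ^ m = (-1) ^ n := by
  rw [← sub_add_cancel m n, zpow_add₀ (neg_ne_zero.2 one_ne_zero), h.neg_one_zpow, one_mul]

theorem neg_one_zpow_add_one (m : ℤ) : (-1 : K) ^ (m + 1) = -(-1) ^ m := by
  rw [zpow_add_one₀ (neg_ne_zero.2 one_ne_zero), mul_neg_one]

theorem neg_zpow_eq_neg_one_zpow_mul (a : K) (m : ℤ) : (-a) ^ m = (-1) ^ m * a ^ m := by
  rw [neg_eq_neg_one_mul, mul_zpow]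

theorem neg_one_zpow_mul_add_div_of_even_sub {a b : ℤ} (h : Even (a - b)) (x y : K) :
    ((-1) ^ a * x + (-1) ^ b * y) / ((-1) ^ b * y) = (x + y) / y := by
  rw [neg_one_zpow_eq_of_even_sub h, ← mul_add,
    mul_div_mul_left _ _ (zpow_ne_zero _ (neg_ne_zero.2 one_ne_zero))]

theorem neg_one_zpow_mul_div_neg_one_zpow_mul (a b : ℤ) (x y : K) :
    (-1) ^ a * x / ((-1) ^ b * y) = (-1) ^ (a + b) * (x / y) := by
  rw [mul_div_mul_comm, ← zpow_sub₀ (neg_ne_zero.2 one_ne_zero)]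
  congr 1
  exact neg_one_zpow_eq_of_even_sub ⟨-b, by ring⟩

end Sign

section QuantumInteger

variable (α s : ℂ) (m : ℤ)

theorem qint_eq_qintA_one : qint s m = qintA 1 s m := by
  simp [qint, qintA]

theorem qintA_neg_left : qintA (-α) s m = -qintA α s m := by
  simp only [qintA, inv_neg]
  ring

theorem qintA_neg_right : qintA α (-s) m = (-1) ^ (m + 1) * qintA α s m := by
  rw [qintA, qintA, neg_zpow_eq_neg_one_zpow_mul s, neg_zpow_eq_neg_one_zpow_mul s, neg_one_zpow_neg,
    neg_one_zpow_add_one, inv_neg, show -s - -s⁻¹ = -(s - s⁻¹) by ring, div_neg]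
  ring

theorem qintA_inv_inv : qintA α⁻¹ s⁻¹ m = qintA α s m := by
  simp only [qintA, inv_inv, inv_zpow', neg_neg, show s⁻¹ - s = -(s - s⁻¹) by ring]
  rw [div_neg, ← neg_div]
  ring

theorem qintA_inv_right : qintA α s⁻¹ (-m) = -qintA α s m := by
  simp only [qintA, inv_inv, inv_zpow', neg_neg, show s⁻¹ - s = -(s - s⁻¹) by ring, div_neg]

theorem qintA_neg_neg : qintA (-α) (-s) m = (-1) ^ m * qintA α s m := by
  rw [qintA_neg_left, qintA_neg_right, neg_one_zpow_add_one]
  ring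

theorem qintA_neg_inv_neg : qintA α (-s⁻¹) (-m) = (-1) ^ m * qintA α s m := by
  rw [qintA_neg_right, qintA_inv_right, neg_one_zpow_add_one, neg_one_zpow_neg]
  ring

theorem qint_inv : qint s⁻¹ m = qint s m := by
  rw [qint_eq_qintA_one, qint_eq_qintA_one, ← qintA_inv_inv 1 s m, inv_one]

theorem qint_neg : qint (-s) m = (-1) ^ (m + 1) * qint s m := by
  rw [qint_eq_qintA_one, qintA_neg_right, qint_eq_qintA_one]

theorem qint_neg_inv : qint (-s⁻¹) m = (-1) ^ (m + 1) * qint s m := by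
  rw [qint_neg, qint_inv]

end QuantumInteger

theorem even_mul_min_add_min {a b k : ℕ} (h : k ≤ a ↔ k ≤ b) :
    Even ((a + b + 1) * (min b (k - 1) + min a (k - 1))) := by
  by_cases ha : k ≤ a
  · have hb := h.1 ha
    rw [min_eq_right (by omega), min_eq_right (by omega)]
    exact Even.mul_left ⟨k - 1, rfl⟩ _
  · have hb : ¬k ≤ b := mt h.2 ha
    rw [min_eq_left (by omega), min_eq_left (by omega), add_comm b a, mul_comm]
    exact Nat.even_mul_succ_self _

def IsConjugatePartition (lam lamV : ℕ → ℕ) : Prop :=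
  ∀ i j : ℕ, 1 ≤ i → 1 ≤ j → (j ≤ lam i ↔ i ≤ lamV j)

namespace IsConjugatePartition

variable {lam lamV : ℕ → ℕ}

theorem symm (h : IsConjugatePartition lam lamV) : IsConjugatePartition lamV lam :=
  fun i j hi hj => (h j i hj hi).symm

theorem antitoneOn (h : IsConjugatePartition lam lamV) : AntitoneOn lam (Set.Ici 1) := by
  intro i hi i' hi' hii'
  rcases Nat.eq_zero_or_pos (lam i') with h0 | hpos
  · omega
  · exact (h i _ hi hpos).2 (hii'.trans ((h i' _ hi' hpos).1 le_rfl))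

theorem eq_zero_of_lt (h : IsConjugatePartition lam lamV) {j : ℕ} (hj : lam 1 < j) :
    lamV j = 0 := by
  by_contra h0
  have := (h 1 j le_rfl (by omega)).2 (by omega)
  omega

end IsConjugatePartition

section CellStatistics

variable (lam lamV : ℕ → ℕ)

theorem hookl_swap (p : ℕ × ℕ) :
    hookl lamV lam p = hookl lam lamV p.swap := by
  simp only [hookl, Prod.fst_swap, Prod.snd_swap]
  ring

theorem dcell_swap {p : ℕ × ℕ} (hp : p.1 ≠ p.2) :
    dcell lamV lam p = -dcell lam lamV p.swap := by
  rcases hp.lt_or_gt with h | h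
  · simp only [dcell, Prod.fst_swap, Prod.snd_swap, if_pos h.le, if_neg h.not_ge]
    ring
  · simp only [dcell, Prod.fst_swap, Prod.snd_swap, if_neg h.not_ge, if_pos h.le]
    ring

theorem even_sub_hookl_diag (i : ℕ) :
    Even ((lam i : ℤ) - lamV i - (hookl lam lamV (i, i) + 1)) :=
  ⟨i - lamV i - 1, by simp only [hookl]; ring⟩

theorem neg_one_zpow_dcell_add_hookl {p : ℕ × ℕ} (hp : p.1 ≠ p.2) :
    (-1 : ℂ) ^ (dcell lam lamV p + (hookl lam lamV p + 1)) =
      (-1) ^ (lam (max p.1 p.2) + lamV (max p.1 p.2) + 1) := by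
  rw [← zpow_natCast]
  apply neg_one_zpow_eq_of_even_sub
  rcases hp.lt_or_gt with h | h
  · simp only [dcell, hookl, if_pos h.le, max_eq_right h.le]
    push_cast
    exact ⟨lam p.1 - p.1 - p.2 + 1, by ring⟩
  · simp only [dcell, hookl, if_neg h.not_ge, max_eq_left h.le]
    push_cast
    exact ⟨-lamV p.1, by ring⟩

end CellStatistics

theorem wenzl_inv_inv (α s : ℂ) (lam lamV : ℕ → ℕ) (N : ℕ) :
    wenzl α⁻¹ s⁻¹ lam lamV N = wenzl α s lam lamV N := by
  simp only [wenzl, qintA_inv_inv, qint_inv]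

section Cells

variable {lam lamV : ℕ → ℕ} {N : ℕ}

theorem mem_cells_iff (hN : ∀ i, N < i → lam i = 0) (hanti : AntitoneOn lam (Set.Ici 1))
    {p : ℕ × ℕ} : p ∈ cells lam N ↔ 1 ≤ p.1 ∧ 1 ≤ p.2 ∧ p.2 ≤ lam p.1 := by
  simp only [cells, mem_filter, mem_product, mem_Icc]
  constructor
  · rintro ⟨⟨⟨h1, -⟩, h2, -⟩, h3⟩
    exact ⟨h1, h2, h3⟩
  · rintro ⟨h1, h2, h3⟩
    have hrow : p.1 ≤ N := by
      by_contra h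
      have := hN p.1 (by omega)
      omega
    exact ⟨⟨⟨h1, hrow⟩, h2, h3.trans (hanti Set.self_mem_Ici h1 h1)⟩, h3⟩

theorem mem_cells_conj_iff (hN : ∀ i, N < i → lam i = 0) (hconj : IsConjugatePartition lam lamV)
    {p : ℕ × ℕ} : p ∈ cells lamV (lam 1) ↔ p.swap ∈ cells lam N := by
  rw [mem_cells_iff (fun _ => hconj.eq_zero_of_lt) hconj.symm.antitoneOn,
    mem_cells_iff hN hconj.antitoneOn, Prod.fst_swap, Prod.snd_swap]
  constructor
  · rintro ⟨h1, h2, h3⟩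
    exact ⟨h2, h1, (hconj _ _ h2 h1).2 h3⟩
  · rintro ⟨h2, h1, h3⟩
    exact ⟨h1, h2, (hconj _ _ h2 h1).1 h3⟩

theorem card_offDiag_cells_filter_max_eq (hN : ∀ i, N < i → lam i = 0)
    (hconj : IsConjugatePartition lam lamV) {k : ℕ} (hk : 1 ≤ k) :
    #{p ∈ (cells lam N).filter (fun p => p.1 ≠ p.2) | max p.1 p.2 = k} =
      min (lamV k) (k - 1) + min (lam k) (k - 1) := by
  have hfiber : {p ∈ (cells lam N).filter (fun p => p.1 ≠ p.2) | max p.1 p.2 = k} =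
      (Icc 1 (min (lamV k) (k - 1))).image (·, k) ∪ (Icc 1 (min (lam k) (k - 1))).image (k, ·) := by
    ext ⟨i, j⟩
    simp only [mem_filter, mem_cells_iff hN hconj.antitoneOn, mem_union, mem_image, mem_Icc,
      Prod.mk.injEq]
    constructor
    · rintro ⟨⟨⟨hi, hj, hji⟩, hne⟩, hmax⟩
      rcases Nat.lt_or_gt_of_ne hne with h | h
      · obtain rfl : j = k := by omega
        exact Or.inl ⟨i, ⟨hi, le_min ((hconj i j hi hk).1 hji) (by omega)⟩, rfl, rfl⟩
      · obtain rfl : i = k := by omega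
        exact Or.inr ⟨j, ⟨hj, le_min hji (by omega)⟩, rfl, rfl⟩
    · rintro (⟨i, ⟨hi, hik⟩, rfl, rfl⟩ | ⟨j, ⟨hj, hjk⟩, rfl, rfl⟩)
      · have := (hconj i k hi hk).2 (by omega)
        omega
      · omega
  have hdisj : Disjoint ((Icc 1 (min (lamV k) (k - 1))).image (·, k))
      ((Icc 1 (min (lam k) (k - 1))).image (k, ·)) := by
    simp only [disjoint_left, mem_image, mem_Icc]
    rintro _ ⟨i, ⟨-, hi⟩, rfl⟩ ⟨j, -, hj⟩
    have := (Prod.mk.inj hj).1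
    omega
  rw [hfiber, card_union_of_disjoint hdisj, card_image_of_injective _ (Prod.mk_left_injective k),
    card_image_of_injective _ (Prod.mk_right_injective k), Nat.card_Icc, Nat.card_Icc]
  omega

theorem prod_offDiag_cells_neg_one_zpow (hN : ∀ i, N < i → lam i = 0)
    (hconj : IsConjugatePartition lam lamV) :
    ∏ p ∈ (cells lam N).filter (fun p => p.1 ≠ p.2),
      (-1 : ℂ) ^ (dcell lam lamV p + (hookl lam lamV p + 1)) = 1 := by
  set offDiag := (cells lam N).filter (fun p => p.1 ≠ p.2)
  have hmaps : ∀ p ∈ offDiag, max p.1 p.2 ∈ offDiag.image (fun p => max p.1 p.2) :=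
    fun p hp => mem_image_of_mem _ hp
  rw [prod_congr rfl fun p hp => neg_one_zpow_dcell_add_hookl lam lamV (mem_filter.1 hp).2,
    ← prod_fiberwise_of_maps_to' hmaps fun k => (-1 : ℂ) ^ (lam k + lamV k + 1)]
  refine prod_eq_one fun k hk => ?_
  have hk1 : 1 ≤ k := by
    obtain ⟨p, hp, rfl⟩ := mem_image.1 hk
    have := ((mem_cells_iff hN hconj.antitoneOn).1 (mem_filter.1 hp).1).1
    omega
  rw [prod_const, card_offDiag_cells_filter_max_eq hN hconj hk1, ← pow_mul]
  exact (even_mul_min_add_min (hconj k k hk1 hk1)).neg_one_pow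

theorem wenzl_neg_neg (α s : ℂ) (hN : ∀ i, N < i → lam i = 0)
    (hconj : IsConjugatePartition lam lamV) :
    wenzl (-α) (-s) lam lamV N = wenzl α s lam lamV N := by
  unfold wenzl
  congr 1
  · refine prod_congr rfl fun p hp => ?_
    obtain ⟨i, j⟩ := p
    obtain rfl : i = j := (mem_filter.1 hp).2
    rw [qintA_neg_neg, qint_neg,
      neg_one_zpow_mul_add_div_of_even_sub (even_sub_hookl_diag lam lamV i)]
  · simp only [qintA_neg_neg, qint_neg, neg_one_zpow_mul_div_neg_one_zpow_mul]
    rw [prod_mul_distrib, prod_offDiag_cells_neg_one_zpow hN hconj, one_mul]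

theorem wenzl_neg_inv_conj (α s : ℂ) (hN : ∀ i, N < i → lam i = 0)
    (hconj : IsConjugatePartition lam lamV) :
    wenzl α (-s⁻¹) lamV lam (lam 1) = wenzl α s lam lamV N := by
  have hmem (P : ℕ × ℕ → Prop) [DecidablePred P] (hP : ∀ p, P p.swap ↔ P p) (p : ℕ × ℕ) :
      p ∈ (cells lamV (lam 1)).filter P ↔ p.swap ∈ (cells lam N).filter P := by
    rw [mem_filter, mem_filter, mem_cells_conj_iff hN hconj, hP]
  unfold wenzl
  congr 1
  · refine prod_equiv (Equiv.prodComm ℕ ℕ) (hmem _ fun p => eq_comm) fun p hp => ?_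
    obtain ⟨i, j⟩ := p
    obtain rfl : i = j := (mem_filter.1 hp).2
    rw [hookl_swap, Prod.swap_prod_mk, ← neg_sub, qintA_neg_inv_neg, qint_neg_inv,
      neg_one_zpow_mul_add_div_of_even_sub (even_sub_hookl_diag lam lamV i)]
    rfl
  · rw [prod_equiv (Equiv.prodComm ℕ ℕ) (hmem _ fun p => ne_comm)
      (g := fun p => (-1 : ℂ) ^ (dcell lam lamV p + (hookl lam lamV p + 1)) *
        (qintA α s (dcell lam lamV p) / qint s (hookl lam lamV p))),
      prod_mul_distrib, prod_offDiag_cells_neg_one_zpow hN hconj, one_mul]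
    intro p hp
    rw [dcell_swap lam lamV (mem_filter.1 hp).2, hookl_swap, qintA_neg_inv_neg, qint_neg_inv,
      neg_one_zpow_mul_div_neg_one_zpow_mul]
    rfl

end Cells

theorem wenzl_symmetries_general (α s : ℂ)
    (lam lamV : ℕ → ℕ) (N : ℕ) (hN : ∀ i, N < i → lam i = 0)
    (hconj : ∀ i j : ℕ, 1 ≤ i → 1 ≤ j → (j ≤ lam i ↔ i ≤ lamV j)) :
    wenzl α s lam lamV N = wenzl (-α) (-s) lam lamV N ∧
    wenzl α s lam lamV N = wenzl α⁻¹ s⁻¹ lam lamV N ∧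
    wenzl α s lam lamV N = wenzl α (-s⁻¹) lamV lam (lam 1) :=
  ⟨(wenzl_neg_neg α s hN hconj).symm, (wenzl_inv_inv α s lam lamV N).symm,
    (wenzl_neg_inv_conj α s hN hconj).symm⟩

/-- Symmetries of Wenzl's quantum dimension:
`⟨λ⟩_{α,s} = ⟨λ⟩_{-α,-s} = ⟨λ⟩_{α⁻¹,s⁻¹} = ⟨λ^∨⟩_{α,-s⁻¹}`. -/
theorem wenzl_symmetries (α s : ℂ) (hα : α ≠ 0) (hs : s ≠ 0)
    (hroot : ∀ m : ℕ, 0 < m → s ^ m ≠ 1)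
    (lam lamV : ℕ → ℕ) (N : ℕ) (hN : ∀ i, N < i → lam i = 0)
    (hconj : ∀ i j : ℕ, 1 ≤ i → 1 ≤ j → (j ≤ lam i ↔ i ≤ lamV j)) :
    wenzl α s lam lamV N = wenzl (-α) (-s) lam lamV N ∧
    wenzl α s lam lamV N = wenzl α⁻¹ s⁻¹ lam lamV N ∧
    wenzl α s lam lamV N = wenzl α (-s⁻¹) lamV lam (lam 1) :=
  wenzl_symmetries_general α s lam lamV N hN hconj
end

section
/- Let α and s be nonzero complex numbers with s not a root of unity, and let j ≥ 1. Then Wenzl's quantum dimension of the single-column partition 1^j = (1,1,…,1) (j parts equal to 1) satisfies ⟨1^j⟩_{α,s} = [0]_α·[−1]_α·…·[2−j]_α·([1−j]_α + [j]) / [j]!, where [j]! = [1][2]⋯[j]. -/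
open Finset

/-- The single-column partition `1^j` (j parts equal to 1), as a 1-based part function. -/
def colPart (j : ℕ) : ℕ → ℕ := fun i => if 1 ≤ i ∧ i ≤ j then 1 else 0

/-- The single-row partition `(j)`, as a 1-based part function. -/
def rowPart (j : ℕ) : ℕ → ℕ := fun i => if i = 1 then j else 0

/-! The Young diagram of `1^j` is the column of cells `(j - t, 1)`, `t < j`. The corner `(1, 1)`
is its only diagonal cell; it has hook length `j` and `λ₁ - λ^∨₁ = 1 - j`. The off-diagonal cell
`(j - t, 1)`, `t < j - 1`, has `d_λ = -t` and hook length `t + 1`, so these cells contribute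
`∏ [-t]_α / [t + 1]`, and the hook lengths together make up `[j]!`. -/

lemma mem_cells_colPart {j : ℕ} {p : ℕ × ℕ} :
    p ∈ cells (colPart j) j ↔ 1 ≤ p.1 ∧ p.1 ≤ j ∧ p.2 = 1 := by
  rw [cells, Finset.mem_filter]
  simp only [colPart, mem_product, mem_Icc]
  split_ifs <;> omega

lemma filter_diag_cells_colPart {j : ℕ} (hj : 1 ≤ j) :
    (cells (colPart j) j).filter (fun p => p.1 = p.2) = {(1, 1)} := by
  ext ⟨i, k⟩
  simp only [mem_filter, mem_cells_colPart, mem_singleton, Prod.mk.injEq]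
  omega

lemma filter_offDiag_cells_colPart (j : ℕ) :
    (cells (colPart j) j).filter (fun p => p.1 ≠ p.2) =
      (range (j - 1)).image (fun t => (j - t, 1)) := by
  ext ⟨i, k⟩
  simp only [mem_filter, mem_cells_colPart, mem_image, mem_range, Prod.mk.injEq]
  constructor
  · rintro ⟨⟨hi, hij, rfl⟩, hne⟩
    exact ⟨j - i, by omega, by omega, rfl⟩
  · rintro ⟨t, ht, rfl, rfl⟩
    omega

lemma colPart_sub_rowPart_one {j : ℕ} (hj : 1 ≤ j) :
    (colPart j 1 : ℤ) - rowPart j 1 = 1 - j := by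
  simp [colPart, rowPart, hj]

lemma hookl_colPart_rowPart {i j : ℕ} (hi : 1 ≤ i) (hij : i ≤ j) :
    hookl (colPart j) (rowPart j) (i, 1) = j + 1 - i := by
  simp only [hookl, colPart, hi, hij, and_self, ↓reduceIte, Nat.cast_one, rowPart, sub_add_cancel,
    sub_left_inj]
  ring

lemma dcell_colPart_rowPart {i j : ℕ} (hi : 1 < i) :
    dcell (colPart j) (rowPart j) (i, 1) = i - j := by
  simp only [dcell, hi.not_ge, ↓reduceIte, rowPart, hi.ne', CharP.cast_eq_zero, neg_zero, zero_sub,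
    Nat.cast_one, add_sub_cancel_right]
  ring

lemma prod_Icc_one_eq_mul_prod_range {M : Type*} [CommMonoid M] (f : ℕ → M) {j : ℕ}
    (hj : 1 ≤ j) : ∏ m ∈ Icc 1 j, f m = f j * ∏ t ∈ range (j - 1), f (t + 1) := by
  obtain ⟨n, rfl⟩ := Nat.exists_eq_add_of_le' hj
  rw [prod_Icc_succ_top (by omega), mul_comm, Nat.add_sub_cancel, range_eq_Ico,
    prod_Ico_add', Ico_add_one_right_eq_Icc, zero_add]

lemma prod_offDiag_cells_colPart (α s : ℂ) (j : ℕ) :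
    ∏ p ∈ (cells (colPart j) j).filter (fun p => p.1 ≠ p.2),
        qintA α s (dcell (colPart j) (rowPart j) p) / qint s (hookl (colPart j) (rowPart j) p) =
      ∏ t ∈ range (j - 1), qintA α s (-(t : ℤ)) / qint s ((t + 1 : ℕ) : ℤ) := by
  have hinj : Set.InjOn (fun t => (j - t, 1)) (range (j - 1) : Set ℕ) := by
    intro a ha b hb h
    simp only [coe_range, Set.mem_Iio, Prod.mk.injEq] at ha hb h
    omega
  rw [filter_offDiag_cells_colPart, prod_image hinj]
  refine prod_congr rfl fun t ht => ?_
  rw [mem_range] at ht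
  rw [dcell_colPart_rowPart (by omega), hookl_colPart_rowPart (by omega) (by omega)]
  push_cast [Nat.cast_sub (by omega : t ≤ j)]
  congr 2 <;> ring

theorem wenzl_column_general (α s : ℂ) (j : ℕ) (hj : 1 ≤ j) :
    wenzl α s (colPart j) (rowPart j) j =
      (∏ t ∈ Finset.range (j - 1), qintA α s (-(t : ℤ))) *
        (qintA α s (1 - (j : ℤ)) + qint s j) /
      ∏ m ∈ Finset.Icc 1 j, qint s m := by
  rw [wenzl, filter_diag_cells_colPart hj, prod_singleton, colPart_sub_rowPart_one hj,
    hookl_colPart_rowPart le_rfl hj, Nat.cast_one, add_sub_cancel_right,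
    prod_offDiag_cells_colPart, prod_div_distrib,
    prod_Icc_one_eq_mul_prod_range (fun m => qint s m) hj]
  ring

/-- Wenzl's quantum dimension of a single column:
`⟨1^j⟩_{α,s} = [0]_α [-1]_α ⋯ [2-j]_α ([1-j]_α + [j]) / [j]!`. -/
theorem wenzl_column (α s : ℂ) (hα : α ≠ 0) (hs : s ≠ 0)
    (hroot : ∀ m : ℕ, 0 < m → s ^ m ≠ 1) (j : ℕ) (hj : 1 ≤ j) :
    wenzl α s (colPart j) (rowPart j) j =
      (∏ t ∈ Finset.range (j - 1), qintA α s (-(t : ℤ))) *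
        (qintA α s (1 - (j : ℤ)) + qint s j) /
      ∏ m ∈ Finset.Icc 1 j, qint s m :=
  wenzl_column_general α s j hj
end

section
/- Let n, k ≥ 1, set l = 2n+2k+2, and let s ∈ ℂ be a primitive 2l-th root of unity. For a partition λ = (λ_1,…,λ_n) with at most n parts define Q(λ) = (−1)^{|λ|} ∏_{j=1}^{n} [2n+2+2λ_j−2j]_s/[2n+2−2j]_s · ∏_{1≤i<j≤n} [2n+2+λ_i−i+λ_j−j]_s·[λ_i−i−λ_j+j]_s / ([2n+2−i−j]_s·[j−i]_s), where [m]_s = s^m − s^{−m}. Then: (a) if λ_1 ≤ k, then Q(λ) ≠ 0; (b) if λ_1 = k+1, then Q(λ) = 0. -/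
/-!
`[m]_s` vanishes exactly when `s^{2m} = 1`, i.e. (for `s` a primitive `2N`-th root of unity,
`N = 2n+2k+2`) exactly when `N ∣ m`. For `λ_1 ≤ k` every bracket occurring in `Q(λ)` has an
argument strictly between `0` and `N`, so `Q(λ) ≠ 0`; for `λ_1 = k+1` the numerator of the
`j = 1` factor of the first product is `[N]_s = 0`.
-/

open Finset

/-- `[m]_s = s^m - s^{-m}`. -/
noncomputable def br (s : ℂ) (m : ℤ) : ℂ := s ^ m - s ^ (-m)

/-- The quantum dimension `Q(λ)` of the simple object of `C^{n,k}` labelled by the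
partition `λ = (λ_1,…,λ_n)` (here `f : Fin n → ℕ` with `f j = λ_{j+1}`):
`Q(λ) = (-1)^{|λ|} ∏_{j=1}^n [2n+2+2λ_j-2j]/[2n+2-2j] ·
∏_{1≤i<j≤n} [2n+2+λ_i-i+λ_j-j]·[λ_i-i-λ_j+j] / ([2n+2-i-j]·[j-i])`. -/
noncomputable def Qdim (s : ℂ) (n : ℕ) (f : Fin n → ℕ) : ℂ :=
  (-1 : ℂ) ^ (∑ j, f j) *
  (∏ j : Fin n,
    br s (2 * n + 2 + 2 * (f j : ℤ) - 2 * ((j : ℕ) + 1)) /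
      br s (2 * n + 2 - 2 * (((j : ℕ) : ℤ) + 1))) *
  ∏ p ∈ (Finset.univ ×ˢ Finset.univ : Finset (Fin n × Fin n)).filter (fun p => p.1 < p.2),
    br s (2 * n + 2 + (f p.1 : ℤ) - ((p.1 : ℕ) + 1) + (f p.2 : ℤ) - ((p.2 : ℕ) + 1)) *
      br s ((f p.1 : ℤ) - ((p.1 : ℕ) + 1) - (f p.2 : ℤ) + ((p.2 : ℕ) + 1)) /
    (br s (2 * n + 2 - (((p.1 : ℕ) : ℤ) + 1) - (((p.2 : ℕ) : ℤ) + 1)) *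
      br s ((((p.2 : ℕ) : ℤ) + 1) - (((p.1 : ℕ) : ℤ) + 1)))

/-- The labelling set `Γ = Γ(C^{n,k})`: partitions with at most `n` parts, each `≤ k`. -/
noncomputable def GammaC (n k : ℕ) : Finset (Fin n → ℕ) :=
  (Finset.Icc 0 (fun _ => k)).filter (fun f => ∀ i j : Fin n, i ≤ j → f j ≤ f i)

lemma br_eq_zero_iff_zpow_two_mul_eq_one {s : ℂ} (hs : s ≠ 0) (m : ℤ) :
    br s m = 0 ↔ s ^ (2 * m) = 1 := by
  rw [br, sub_eq_zero, zpow_neg, ← mul_eq_one_iff_eq_inv₀ (zpow_ne_zero _ hs),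
    ← zpow_add₀ hs, two_mul]

lemma IsPrimitiveRoot.br_eq_zero_iff {s : ℂ} {N : ℕ} (hN : N ≠ 0)
    (hs : IsPrimitiveRoot s (2 * N)) (m : ℤ) : br s m = 0 ↔ (N : ℤ) ∣ m := by
  rw [br_eq_zero_iff_zpow_two_mul_eq_one (hs.ne_zero (by omega)), hs.zpow_eq_one_iff_dvd,
    Nat.cast_mul, Nat.cast_two, mul_dvd_mul_iff_left two_ne_zero]

lemma IsPrimitiveRoot.br_ne_zero {s : ℂ} {N : ℕ} (hs : IsPrimitiveRoot s (2 * N)) {m : ℤ}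
    (h0 : 0 < m) (hN : m < N) : br s m ≠ 0 := by
  rw [Ne, hs.br_eq_zero_iff (by omega)]
  exact fun hdvd => absurd (Int.le_of_dvd h0 hdvd) (not_le.mpr hN)

lemma IsPrimitiveRoot.br_self {s : ℂ} {N : ℕ} (hN : N ≠ 0) (hs : IsPrimitiveRoot s (2 * N)) :
    br s N = 0 :=
  (hs.br_eq_zero_iff hN N).mpr dvd_rfl

theorem Qdim_ne_zero {n k : ℕ} {s : ℂ} (hs : IsPrimitiveRoot s (2 * (2 * n + 2 * k + 2)))
    {f : Fin n → ℕ} (hf : Antitone f) (hfk : ∀ j, f j ≤ k) : Qdim s n f ≠ 0 := by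
  have hbr {m : ℤ} (h0 : 0 < m) (hN : m < 2 * n + 2 * k + 2) : br s m ≠ 0 :=
    hs.br_ne_zero h0 (by push_cast; exact hN)
  refine mul_ne_zero (mul_ne_zero (pow_ne_zero _ (neg_ne_zero.mpr one_ne_zero)) ?_) ?_
  · refine prod_ne_zero_iff.mpr fun j _ => div_ne_zero (hbr ?_ ?_) (hbr ?_ ?_) <;>
      · have := hfk j; have := j.isLt; omega
  · refine prod_ne_zero_iff.mpr fun ⟨i, j⟩ hmem => ?_
    dsimp only
    have hij : (i : ℕ) < j := (mem_filter.mp hmem).2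
    have hfij : f j ≤ f i := hf hij.le
    have hfi := hfk i
    have hj := j.isLt
    exact div_ne_zero (mul_ne_zero (hbr (by omega) (by omega)) (hbr (by omega) (by omega)))
      (mul_ne_zero (hbr (by omega) (by omega)) (hbr (by omega) (by omega)))

theorem Qdim_eq_zero_of_br_eq_zero {s : ℂ} {n : ℕ} {f : Fin n → ℕ} (j : Fin n)
    (hj : br s (2 * n + 2 + 2 * (f j : ℤ) - 2 * ((j : ℕ) + 1)) = 0) : Qdim s n f = 0 := by
  rw [Qdim, prod_eq_zero (mem_univ j) (by rw [hj, zero_div]), mul_zero, zero_mul]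

theorem Qdim_ne_zero_and_eq_zero_general (n k : ℕ) (hn : 0 < n)
    (s : ℂ) (hs : IsPrimitiveRoot s (2 * (2 * n + 2 * k + 2)))
    (f : Fin n → ℕ) (hmono : ∀ i j : Fin n, i ≤ j → f j ≤ f i) :
    (f ⟨0, hn⟩ ≤ k → Qdim s n f ≠ 0) ∧
    (f ⟨0, hn⟩ = k + 1 → Qdim s n f = 0) := by
  refine ⟨fun h0 => Qdim_ne_zero hs hmono fun j => (hmono _ j (Nat.zero_le _)).trans h0,
    fun h0 => Qdim_eq_zero_of_br_eq_zero ⟨0, hn⟩ ?_⟩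
  convert hs.br_self (by omega) using 2
  push_cast [h0]
  ring

/-- For `s` a primitive `2l`-th root of unity, `l = 2n+2k+2`:
(a) if `λ_1 ≤ k` then `Q(λ) ≠ 0`; (b) if `λ_1 = k+1` then `Q(λ) = 0`. -/
theorem Qdim_ne_zero_and_eq_zero (n k : ℕ) (hn : 0 < n) (hk : 1 ≤ k)
    (s : ℂ) (hs : IsPrimitiveRoot s (2 * (2 * n + 2 * k + 2)))
    (f : Fin n → ℕ) (hmono : ∀ i j : Fin n, i ≤ j → f j ≤ f i) :
    (f ⟨0, hn⟩ ≤ k → Qdim s n f ≠ 0) ∧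
    (f ⟨0, hn⟩ = k + 1 → Qdim s n f = 0) :=
  Qdim_ne_zero_and_eq_zero_general n k hn s hs f hmono
end

section
/- Let n, k ≥ 1, set l = 2n+2k+2, let s ∈ ℂ be a primitive 2l-th root of unity, and let g ≥ 1 be an integer. Then, with [m]_s = s^m − s^{−m}, one has the level-rank duality identity (−l)^{n(g−1)} · ∑_{n+k ≥ l_1 > … > l_n > 0} ( ∏_{j=1}^{n} [2l_j]_s · ∏_{1≤i<j≤n} [l_i+l_j]_s·[l_i−l_j]_s )^{2(1−g)} = (−l)^{k(g−1)} · ∑_{n+k ≥ m_1 > … > m_k > 0} ( ∏_{j=1}^{k} [2m_j]_s · ∏_{1≤i<j≤k} [m_i+m_j]_s·[m_i−m_j]_s )^{2(1−g)}, where the left sum runs over strictly decreasing n-tuples and the right sum over strictly decreasing k-tuples of positive integers bounded by n+k, and negative integer powers denote inverses in ℂ. -/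
open Finset

/-- The index set of strictly decreasing tuples `b ≥ l_1 > l_2 > … > l_n > 0`
(with `t j = l_{j+1}`). -/
noncomputable def Tuples' (n b : ℕ) : Finset (Fin n → ℕ) :=
  (Finset.Icc 0 (fun _ => b)).filter
    (fun t => (∀ i j : Fin n, i < j → t j < t i) ∧ ∀ i, 0 < t i)

/-- `∏_{j=1}^n [2l_j]_s · ∏_{1≤i<j≤n} [l_i+l_j]_s [l_i-l_j]_s`. -/
noncomputable def Pprod (s : ℂ) (n : ℕ) (t : Fin n → ℕ) : ℂ :=
  (∏ j : Fin n, br s (2 * (t j : ℤ))) *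
  ∏ p ∈ (Finset.univ ×ˢ Finset.univ : Finset (Fin n × Fin n)).filter (fun p => p.1 < p.2),
    br s ((t p.1 : ℤ) + (t p.2 : ℤ)) * br s ((t p.1 : ℤ) - (t p.2 : ℤ))

/-!
Put `m = n + k`, `ζ = s²` (a primitive `(2m+2)`-th root of unity) and `x_a = ζ^a + ζ^{-a}`.
The identities `[2a]² = x_a² - 4` and `[a+b][a-b] = x_a - x_b` show that the square of the
product attached to a decreasing tuple only depends on its set `S ⊆ {1,…,m}` of entries: it is
`∏_{a ∈ S} (x_a² - 4) ∏_{b ∈ S, b ≠ a} δ(a,b)` with `δ(a,b) = x_{max a b} - x_{min a b}`.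
Differentiating `X^{2m+2} - 1 = (X - 1)(X + 1) ∏_{b ≤ m} (X - ζ^b)(X - ζ^{-b})` at `ζ^a` gives
`(x_a² - 4) ∏_{b ≤ m, b ≠ a} δ(a,b) = (-1)^m (2m+2)` for every `1 ≤ a ≤ m`. Multiplying over
`a ∈ S` shows that `(-(2m+2))^{|S|}` divided by the squared product of `S` equals
`(-1)^{|S||T|} ∏_{a ∈ S, b ∈ T} δ(a,b)`, `T` the complement of `S`, which is symmetric in `S`
and `T`. Complementation matches the `n`-subsets with the `k`-subsets of `{1,…,m}`, so the two
sums agree term by term.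
-/

open Polynomial

theorem Finset.prod_range_two_mul_add_two {M : Type*} [CommMonoid M] (f : ℕ → M) (m : ℕ) :
    ∏ j ∈ range (2 * m + 2), f j = f 0 * f (m + 1) * ∏ b ∈ Icc 1 m, (f b * f (2 * m + 2 - b)) := by
  have hsplit : 2 * m + 2 = (m + 1) + (m + 1) := by ring
  have hrefl : ∀ j ∈ range m, f (m + 1 + (m - 1 - j + 1)) = f (2 * m + 2 - (1 + j)) := by
    intro j hj
    rw [mem_range] at hj
    congr 1
    omega
  rw [hsplit, prod_range_add, prod_range_succ', prod_range_succ', ← hsplit, prod_mul_distrib,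
    ← Ico_add_one_right_eq_Icc, prod_Ico_eq_prod_range, prod_Ico_eq_prod_range,
    ← prod_range_reflect (fun j => f (m + 1 + (j + 1))), prod_congr rfl hrefl, Nat.add_sub_cancel]
  simp only [add_comm 1]
  ac_rfl

theorem Finset.prod_filter_lt_sq {α M : Type*} [LinearOrder α] [CommMonoid M] (S : Finset α)
    (f : α → α → M) (hf : ∀ a b, f a b = f b a) :
    (∏ p ∈ (S ×ˢ S).filter (fun p => p.2 < p.1), f p.1 p.2) ^ 2 =
      ∏ a ∈ S, ∏ b ∈ S.erase a, f a b := by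
  have hswap : ∏ p ∈ (S ×ˢ S).filter (fun p => p.2 < p.1), f p.1 p.2 =
      ∏ p ∈ (S ×ˢ S).filter (fun p => p.1 < p.2), f p.1 p.2 :=
    prod_nbij' Prod.swap Prod.swap (by simp [and_comm]) (by simp [and_comm]) (by simp) (by simp)
      fun p _ => hf _ _
  rw [sq]
  nth_rw 2 [hswap]
  rw [← prod_union (disjoint_filter.2 fun p _ h1 h2 => lt_asymm h1 h2), ← filter_or, prod_filter,
    prod_product]
  refine prod_congr rfl fun a _ => ?_
  rw [← prod_filter]
  congr 1
  ext b
  simp only [mem_filter, mem_erase, lt_or_lt_iff_ne, ne_comm, and_comm]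

section TwoCos

variable {K : Type*} [Field K]

noncomputable def twoCos (ζ : K) (a : ℕ) : K := ζ ^ a + (ζ ^ a)⁻¹

noncomputable def twoCosDiff (ζ : K) (a b : ℕ) : K := twoCos ζ (max a b) - twoCos ζ (min a b)

theorem twoCosDiff_comm (ζ : K) (a b : ℕ) : twoCosDiff ζ a b = twoCosDiff ζ b a := by
  rw [twoCosDiff, twoCosDiff, max_comm, min_comm]

theorem twoCosDiff_of_lt (ζ : K) {a b : ℕ} (h : b < a) :
    twoCosDiff ζ a b = twoCos ζ a - twoCos ζ b := by
  rw [twoCosDiff, max_eq_left h.le, min_eq_right h.le]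

theorem prod_twoCosDiff_erase (ζ : K) {a m : ℕ} (ha : a ∈ Icc 1 m) :
    ∏ b ∈ (Icc 1 m).erase a, twoCosDiff ζ a b =
      (-1) ^ (m - a) * ∏ b ∈ (Icc 1 m).erase a, (twoCos ζ a - twoCos ζ b) := by
  have hsign : ∀ b, twoCosDiff ζ a b = (if a < b then -1 else 1) * (twoCos ζ a - twoCos ζ b) := by
    intro b
    split_ifs with h
    · rw [twoCosDiff_comm, twoCosDiff_of_lt ζ h]
      ring
    · rw [twoCosDiff, max_eq_left (not_lt.1 h), min_eq_right (not_lt.1 h), one_mul]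
  have hIoc : ((Icc 1 m).erase a).filter (a < ·) = Ioc a m := by
    ext b
    simp only [mem_filter, mem_erase, mem_Icc, mem_Ioc]
    grind
  rw [prod_congr rfl fun b _ => hsign b, prod_mul_distrib, prod_ite, prod_const, prod_const_one,
    hIoc, Nat.card_Ioc, mul_one]

theorem sub_mul_sub_inv_eq {u v : K} (hu : u ≠ 0) (hv : v ≠ 0) :
    (u - v) * (u - v⁻¹) = u * (u + u⁻¹ - (v + v⁻¹)) := by
  field_simp
  ring

variable {ζ : K} {m : ℕ}

theorem IsPrimitiveRoot.pow_succ_eq_neg_one (hζ : IsPrimitiveRoot ζ (2 * m + 2)) :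
    ζ ^ (m + 1) = -1 :=
  (hζ.pow (by omega) (by ring)).eq_neg_one_of_two_right

theorem IsPrimitiveRoot.X_pow_sub_one_eq_prod_inv_pairs (hζ : IsPrimitiveRoot ζ (2 * m + 2)) :
    (X ^ (2 * m + 2) - 1 : K[X]) =
      (X - 1) * (X + 1) * ∏ b ∈ Icc 1 m, (X - C (ζ ^ b)) * (X - C (ζ ^ b)⁻¹) := by
  rw [← C_1, X_pow_sub_C_eq_prod hζ (by omega) (one_pow _), prod_range_two_mul_add_two]
  simp only [mul_one, pow_zero, hζ.pow_succ_eq_neg_one, map_neg, sub_neg_eq_add, C_1]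
  refine congrArg _ (prod_congr rfl fun b hb => ?_)
  rw [pow_sub₀ _ (hζ.ne_zero (by omega)) (by grind), hζ.pow_eq_one, one_mul]

theorem IsPrimitiveRoot.twoCos_sq_sub_four_mul_prod (hζ : IsPrimitiveRoot ζ (2 * m + 2))
    {a : ℕ} (ha : a ∈ Icc 1 m) :
    (twoCos ζ a ^ 2 - 4) * ∏ b ∈ (Icc 1 m).erase a, (twoCos ζ a - twoCos ζ b) =
      (-1) ^ a * (2 * m + 2) := by
  have hζ0 : ζ ≠ 0 := hζ.ne_zero (by omega)
  set u := ζ ^ a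
  have hu0 : u ≠ 0 := pow_ne_zero _ hζ0
  have hu : u ^ (m + 1) = (-1) ^ a := by rw [← pow_mul, mul_comm, pow_mul, hζ.pow_succ_eq_neg_one]
  set h : K[X] := (X - 1) * (X + 1) * (X - C u⁻¹) *
    ∏ b ∈ (Icc 1 m).erase a, (X - C (ζ ^ b)) * (X - C (ζ ^ b)⁻¹)
  have hfac : (X ^ (2 * m + 2) - 1 : K[X]) = (X - C u) * h := by
    rw [hζ.X_pow_sub_one_eq_prod_inv_pairs, ← mul_prod_erase _ _ ha]
    ring
  have hderiv : (2 * m + 2) * u ^ (2 * m + 1) = h.eval u := by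
    have := congrArg (fun p => (derivative p).eval u) hfac
    simp only [derivative_mul, derivative_sub, derivative_X_pow, derivative_X, derivative_C,
      derivative_one, sub_zero, eval_add, eval_mul, eval_sub, eval_C, eval_pow, eval_X,
      sub_self, zero_mul, add_zero, one_mul] at this
    exact_mod_cast this
  set P := ∏ b ∈ (Icc 1 m).erase a, (twoCos ζ a - twoCos ζ b)
  have heval : h.eval u = (u - 1) * (u + 1) * (u - u⁻¹) * (u ^ (m - 1) * P) := by
    simp only [h, eval_mul, eval_sub, eval_add, eval_X, eval_C, eval_one, eval_prod]
    rw [prod_congr rfl fun b _ => sub_mul_sub_inv_eq hu0 (pow_ne_zero b hζ0), prod_mul_distrib,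
      prod_const, card_erase_of_mem ha, Nat.card_Icc, Nat.add_sub_cancel]
    rfl
  obtain ⟨m, rfl⟩ : ∃ m', m = m' + 1 := ⟨m - 1, by grind⟩
  rw [heval, Nat.add_sub_cancel] at hderiv
  apply mul_left_cancel₀ (pow_ne_zero (m + 1) hu0)
  rw [← hu, show twoCos ζ a = u + u⁻¹ from rfl]
  -- `hderiv` is the goal up to the relation `u * u⁻¹ = 1`
  linear_combination (-1) * hderiv + u ^ m * P * (3 * u + u⁻¹) * mul_inv_cancel₀ hu0

theorem IsPrimitiveRoot.twoCos_sq_sub_four_mul_prod_twoCosDiff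
    (hζ : IsPrimitiveRoot ζ (2 * m + 2)) {a : ℕ} (ha : a ∈ Icc 1 m) :
    (twoCos ζ a ^ 2 - 4) * ∏ b ∈ (Icc 1 m).erase a, twoCosDiff ζ a b = (-1) ^ m * (2 * m + 2) := by
  rw [prod_twoCosDiff_erase ζ ha, mul_left_comm, hζ.twoCos_sq_sub_four_mul_prod ha, ← mul_assoc,
    ← pow_add, Nat.sub_add_cancel (mem_Icc.1 ha).2]

end TwoCos

theorem br_two_mul_sq {s : ℂ} (hs : s ≠ 0) (a : ℕ) :
    br s (2 * a) ^ 2 = twoCos (s ^ 2) a ^ 2 - 4 := by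
  simp only [br, twoCos, zpow_neg, zpow_mul, zpow_natCast, ← pow_mul]
  field_simp
  ring

theorem br_add_mul_br_sub {s : ℂ} (hs : s ≠ 0) (a b : ℕ) :
    br s (a + b) * br s (a - b) = twoCos (s ^ 2) a - twoCos (s ^ 2) b := by
  simp only [br, twoCos, zpow_neg, zpow_add₀ hs, zpow_sub₀ hs, zpow_natCast, ← pow_mul]
  field_simp
  ring

noncomputable def PprodSet (s : ℂ) (S : Finset ℕ) : ℂ :=
  (∏ a ∈ S, br s (2 * (a : ℤ))) *
  ∏ p ∈ (S ×ˢ S).filter (fun p => p.2 < p.1),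
    br s ((p.1 : ℤ) + (p.2 : ℤ)) * br s ((p.1 : ℤ) - (p.2 : ℤ))

theorem Pprod_eq_PprodSet (s : ℂ) {n : ℕ} {t : Fin n → ℕ} (ht : StrictAnti t) :
    Pprod s n t = PprodSet s (univ.image t) := by
  have hpairs : ((univ ×ˢ univ).filter (fun p : Fin n × Fin n => p.1 < p.2)).image (Prod.map t t) =
      (univ.image t ×ˢ univ.image t).filter (fun p => p.2 < p.1) := by
    ext ⟨a, b⟩
    simp only [mem_image, mem_filter, mem_product, mem_univ, true_and, Prod.exists, Prod.map,
      Prod.mk.injEq]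
    constructor
    · rintro ⟨i, j, hij, rfl, rfl⟩
      exact ⟨⟨⟨i, rfl⟩, ⟨j, rfl⟩⟩, ht hij⟩
    · rintro ⟨⟨⟨i, rfl⟩, ⟨j, rfl⟩⟩, hji⟩
      exact ⟨i, j, ht.lt_iff_gt.1 hji, rfl, rfl⟩
  rw [Pprod, PprodSet, prod_image fun i _ j _ h => ht.injective h, ← hpairs,
    prod_image fun p _ q _ h => ht.injective.prodMap ht.injective h]
  rfl

theorem PprodSet_sq {s : ℂ} (hs : s ≠ 0) (S : Finset ℕ) :
    PprodSet s S ^ 2 =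
      ∏ a ∈ S, ((twoCos (s ^ 2) a ^ 2 - 4) * ∏ b ∈ S.erase a, twoCosDiff (s ^ 2) a b) := by
  have hpair : ∀ p ∈ (S ×ˢ S).filter (fun p => p.2 < p.1),
      br s ((p.1 : ℤ) + (p.2 : ℤ)) * br s ((p.1 : ℤ) - (p.2 : ℤ)) = twoCosDiff (s ^ 2) p.1 p.2 :=
    fun p hp => by rw [br_add_mul_br_sub hs, twoCosDiff_of_lt _ (mem_filter.1 hp).2]
  rw [PprodSet, mul_pow, prod_congr rfl hpair, prod_filter_lt_sq _ _ (twoCosDiff_comm _),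
    ← prod_pow, ← prod_mul_distrib]
  simp only [br_two_mul_sq hs]

theorem PprodSet_sq_mul_prod_twoCosDiff {s : ℂ} {m : ℕ} (hs : IsPrimitiveRoot s (2 * (2 * m + 2)))
    {S : Finset ℕ} (hS : S ⊆ Icc 1 m) :
    PprodSet s S ^ 2 * ∏ a ∈ S, ∏ b ∈ Icc 1 m \ S, twoCosDiff (s ^ 2) a b =
      ((-1) ^ m * (2 * m + 2)) ^ #S := by
  have hζ : IsPrimitiveRoot (s ^ 2) (2 * m + 2) := hs.pow (by omega) (by ring)
  rw [PprodSet_sq (hs.ne_zero (by omega)), ← prod_mul_distrib, ← prod_const]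
  refine prod_congr rfl fun a ha => ?_
  have hsplit : S.erase a ∪ (Icc 1 m \ S) = (Icc 1 m).erase a := by
    ext b
    simp only [mem_union, mem_erase, mem_sdiff]
    grind
  rw [mul_assoc, ← prod_union (disjoint_sdiff.mono_left (erase_subset a S)), hsplit,
    hζ.twoCos_sq_sub_four_mul_prod_twoCosDiff (hS ha)]

noncomputable def verlindeWeight (s : ℂ) (m : ℕ) (S : Finset ℕ) : ℂ :=
  (-(2 * m + 2 : ℂ)) ^ #S * (PprodSet s S ^ 2)⁻¹

theorem neg_one_pow_mul_self {R : Type*} [Monoid R] [HasDistribNeg R] (n : ℕ) :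
    (-1 : R) ^ (n * n) = (-1) ^ n := by
  rcases Nat.even_or_odd n with h | h
  · rw [h.neg_one_pow, (h.mul_right n).neg_one_pow]
  · rw [h.neg_one_pow, (h.mul h).neg_one_pow]

theorem neg_pow_div_neg_one_pow_add_mul_pow {K : Type*} [Field K] {L : K} (hL : L ≠ 0) (n k : ℕ) :
    (-L) ^ n / ((-1) ^ (n + k) * L) ^ n = (-1) ^ (n * k) := by
  have hsq : ((-1 : K) ^ (n * k)) ^ 2 = 1 := by rw [← pow_mul, pow_mul', neg_one_sq, one_pow]
  rw [div_eq_iff (by simp [hL]), neg_pow, mul_pow, ← pow_mul, add_mul, pow_add,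
    neg_one_pow_mul_self, mul_comm k n]
  linear_combination (-(-1 : K) ^ n * L ^ n) * hsq

theorem verlindeWeight_eq {s : ℂ} {m : ℕ} (hs : IsPrimitiveRoot s (2 * (2 * m + 2)))
    {S : Finset ℕ} (hS : S ⊆ Icc 1 m) :
    verlindeWeight s m S =
      (-1) ^ (#S * #(Icc 1 m \ S)) * ∏ a ∈ S, ∏ b ∈ Icc 1 m \ S, twoCosDiff (s ^ 2) a b := by
  have key := PprodSet_sq_mul_prod_twoCosDiff hs hS
  set W := ∏ a ∈ S, ∏ b ∈ Icc 1 m \ S, twoCosDiff (s ^ 2) a b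
  have hL : (2 * m + 2 : ℂ) ≠ 0 := by norm_cast
  have hW : W ≠ 0 := right_ne_zero_of_mul (key ▸ pow_ne_zero _ (by simp [hL]))
  have hm : m = #S + #(Icc 1 m \ S) := by
    rw [card_sdiff_of_subset hS, Nat.card_Icc, Nat.add_sub_cancel,
      Nat.add_sub_cancel' (by simpa using card_le_card hS)]
  rw [verlindeWeight, eq_div_of_mul_eq hW key, inv_div, ← mul_div_assoc, mul_div_right_comm]
  nth_rw 2 [hm]
  rw [neg_pow_div_neg_one_pow_add_mul_pow hL]

theorem verlindeWeight_sdiff {s : ℂ} {m : ℕ} (hs : IsPrimitiveRoot s (2 * (2 * m + 2)))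
    {S : Finset ℕ} (hS : S ⊆ Icc 1 m) :
    verlindeWeight s m (Icc 1 m \ S) = verlindeWeight s m S := by
  rw [verlindeWeight_eq hs sdiff_subset, verlindeWeight_eq hs hS, Finset.sdiff_sdiff_eq_self hS,
    mul_comm #S, prod_comm]
  simp only [twoCosDiff_comm (s ^ 2)]

theorem mem_Tuples' {n B : ℕ} {t : Fin n → ℕ} :
    t ∈ Tuples' n B ↔ StrictAnti t ∧ ∀ i, t i ∈ Icc 1 B := by
  simp only [Tuples', mem_filter, mem_Icc, Pi.le_def, zero_le, true_and, StrictAnti,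
    Nat.one_le_iff_ne_zero, Nat.pos_iff_ne_zero]
  exact ⟨fun ⟨h1, h2, h3⟩ => ⟨h2, fun i => ⟨h3 i, h1 i⟩⟩,
    fun ⟨h1, h2⟩ => ⟨fun i => (h2 i).2, h1, fun i => (h2 i).1⟩⟩

theorem sum_Tuples'_eq_sum_powersetCard {M : Type*} [AddCommMonoid M] (n B : ℕ)
    (F : Finset ℕ → M) :
    ∑ t ∈ Tuples' n B, F (univ.image t) = ∑ S ∈ powersetCard n (Icc 1 B), F S := by
  have hrange (u : Fin n → ℕ) : Set.range (fun i : Fin n => u i.rev) = ↑(univ.image u) := by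
    rw [coe_image, coe_univ, Set.image_univ]
    exact Fin.rev_surjective.range_comp u
  have hinj : Set.InjOn (fun t : Fin n → ℕ => univ.image t) (Tuples' n B) := by
    intro t ht t' ht' h
    have hmono : ∀ {u}, u ∈ Tuples' n B → StrictMono fun i : Fin n => u i.rev := fun hu =>
      StrictAnti.comp (mem_Tuples'.1 hu).1 Fin.rev_strictAnti
    have := ((hmono ht).range_inj (hmono ht')).1 (by rw [hrange, hrange]; exact congrArg _ h)
    funext i
    simpa using congrFun this i.rev
  rw [← sum_image hinj]
  congr 1
  ext S
  simp only [mem_image, mem_powersetCard]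
  constructor
  · rintro ⟨t, ht, rfl⟩
    obtain ⟨hanti, hval⟩ := mem_Tuples'.1 ht
    exact ⟨fun a ha => by obtain ⟨i, -, rfl⟩ := mem_image.1 ha; exact hval i,
      by rw [card_image_of_injective _ hanti.injective, card_univ, Fintype.card_fin]⟩
  · rintro ⟨hS, hcard⟩
    refine ⟨fun i => S.orderEmbOfFin hcard i.rev, mem_Tuples'.2 ⟨?_, fun i => hS ?_⟩, ?_⟩
    · exact (S.orderEmbOfFin hcard).strictMono.comp_strictAnti Fin.rev_strictAnti
    · exact orderEmbOfFin_mem _ _ _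
    · rw [← Finset.coe_inj, ← hrange]
      simp only [Fin.rev_rev]
      exact range_orderEmbOfFin S hcard

theorem sum_powersetCard_sdiff {α M : Type*} [DecidableEq α] [AddCommMonoid M] {U : Finset α}
    {n k : ℕ} (h : #U = n + k) (F : Finset α → M) :
    ∑ S ∈ powersetCard n U, F (U \ S) = ∑ T ∈ powersetCard k U, F T := by
  have hmaps {a b : ℕ} (hab : a + b = #U) (S : Finset α) (hS : S ∈ powersetCard a U) :
      U \ S ∈ powersetCard b U := by
    rw [mem_powersetCard] at hS ⊢
    exact ⟨sdiff_subset, by rw [card_sdiff_of_subset hS.1, hS.2]; omega⟩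
  exact sum_nbij' (U \ ·) (U \ ·) (hmaps h.symm) (hmaps (by omega))
    (fun S hS => Finset.sdiff_sdiff_eq_self (mem_powersetCard.1 hS).1)
    (fun S hS => Finset.sdiff_sdiff_eq_self (mem_powersetCard.1 hS).1) fun _ _ => rfl

theorem zpow_mul_sub_one_mul_zpow_two_mul_one_sub {G : Type*} [DivisionCommMonoid G] (a b : G)
    (j : ℕ) (e : ℤ) :
    a ^ ((j : ℤ) * (e - 1)) * b ^ (2 * (1 - e)) = (a ^ j * (b ^ 2)⁻¹) ^ (e - 1) := by
  rw [zpow_mul, zpow_natCast, show 2 * (1 - e) = 2 * -(e - 1) by ring, zpow_mul, zpow_neg,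
    zpow_ofNat, mul_zpow, inv_zpow]

theorem level_rank_duality_C_general (n k : ℕ)
    (s : ℂ) (hs : IsPrimitiveRoot s (2 * (2 * n + 2 * k + 2)))
    (g : ℕ) :
    (-((2 * n + 2 * k + 2 : ℕ) : ℂ)) ^ ((n : ℤ) * ((g : ℤ) - 1)) *
      ∑ t ∈ Tuples' n (n + k), Pprod s n t ^ (2 * (1 - (g : ℤ))) =
    (-((2 * n + 2 * k + 2 : ℕ) : ℂ)) ^ ((k : ℤ) * ((g : ℤ) - 1)) *
      ∑ t ∈ Tuples' k (n + k), Pprod s k t ^ (2 * (1 - (g : ℤ))) := by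
  have hs' : IsPrimitiveRoot s (2 * (2 * (n + k) + 2)) := by convert hs using 2; ring
  have hterm : ∀ j, ∀ t ∈ Tuples' j (n + k),
      (-((2 * n + 2 * k + 2 : ℕ) : ℂ)) ^ ((j : ℤ) * ((g : ℤ) - 1)) *
        Pprod s j t ^ (2 * (1 - (g : ℤ))) = verlindeWeight s (n + k) (univ.image t) ^ ((g : ℤ) - 1) := by
    intro j t ht
    have hanti := (mem_Tuples'.1 ht).1
    rw [zpow_mul_sub_one_mul_zpow_two_mul_one_sub, Pprod_eq_PprodSet s hanti, verlindeWeight,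
      card_image_of_injective _ hanti.injective, card_univ, Fintype.card_fin]
    congr 4
    push_cast
    ring
  rw [mul_sum, mul_sum, sum_congr rfl (hterm n), sum_congr rfl (hterm k),
    sum_Tuples'_eq_sum_powersetCard n _ fun S => verlindeWeight s (n + k) S ^ ((g : ℤ) - 1),
    sum_Tuples'_eq_sum_powersetCard k _ fun S => verlindeWeight s (n + k) S ^ ((g : ℤ) - 1),
    ← sum_powersetCard_sdiff (by simp : #(Icc 1 (n + k)) = n + k)]
  exact sum_congr rfl fun S hS => by rw [verlindeWeight_sdiff hs' (mem_powersetCard.1 hS).1]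

/-- Level-rank duality `d_g(C^{n,k}) = d_g(C^{k,n})` for the
genus-`g` Verlinde formulas, with `l = 2n+2k+2` and `s` a primitive `2l`-th root
of unity. -/
theorem level_rank_duality_C (n k : ℕ) (hn : 1 ≤ n) (hk : 1 ≤ k)
    (s : ℂ) (hs : IsPrimitiveRoot s (2 * (2 * n + 2 * k + 2)))
    (g : ℕ) (hg : 1 ≤ g) :
    (-((2 * n + 2 * k + 2 : ℕ) : ℂ)) ^ ((n : ℤ) * ((g : ℤ) - 1)) *
      ∑ t ∈ Tuples' n (n + k), Pprod s n t ^ (2 * (1 - (g : ℤ))) =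
    (-((2 * n + 2 * k + 2 : ℕ) : ℂ)) ^ ((k : ℤ) * ((g : ℤ) - 1)) *
      ∑ t ∈ Tuples' k (n + k), Pprod s k t ^ (2 * (1 - (g : ℤ))) :=
  level_rank_duality_C_general n k s hs g
end

section
/- Let s ∈ ℂ be a primitive 16-th root of unity and let g ≥ 1 be an integer. Then (−8)^{g−1} · ∑_{l=1}^{3} ( (s^{2l} − s^{−2l})² )^{1−g} = 2^{g−1}(1 + 2^g), where negative integer powers denote inverses in ℂ. -/
/-! With `s⁸ = -1`, the squares `(s^{2l} - s^{-2l})²` for `l = 1, 2, 3` equal `-2, -4, -2`,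
because `x⁻¹ = -x³` when `x⁴ = -1` and `x⁻¹ = -x` when `x² = -1`. What remains is the identity
`(-8)ⁿ (2 (-2)⁻ⁿ + (-4)⁻ⁿ) = 2·4ⁿ + 2ⁿ = 2ⁿ (1 + 2ⁿ⁺¹)`, valid for every integer `n`. -/

theorem IsPrimitiveRoot.pow_eight_eq_neg_one {R : Type*} [CommRing R] [NoZeroDivisors R]
    {s : R} (hs : IsPrimitiveRoot s 16) : s ^ 8 = -1 :=
  (hs.pow_of_dvd (p := 8) (by norm_num) (by norm_num)).eq_neg_one_of_two_right

section Field

variable {K : Type*} [Field K]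

theorem sub_inv_sq_of_pow_four_eq_neg_one {x : K} (hx : x ^ 4 = -1) : (x - x⁻¹) ^ 2 = -2 := by
  rw [inv_eq_of_mul_eq_one_right (b := -x ^ 3) (by linear_combination -hx)]
  linear_combination (x ^ 2 + 2) * hx

theorem sub_inv_sq_of_sq_eq_neg_one {x : K} (hx : x ^ 2 = -1) : (x - x⁻¹) ^ 2 = -4 := by
  rw [inv_eq_of_mul_eq_one_right (b := -x) (by linear_combination -hx)]
  linear_combination 4 * hx

theorem neg_eight_zpow_mul_add_zpow_neg [CharZero K] (n : ℤ) :
    (-8 : K) ^ n * (2 * (-2) ^ (-n) + (-4) ^ (-n)) = 2 ^ n * (1 + 2 ^ (n + 1)) := by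
  have h4 : (-8 : K) ^ n * (-2) ^ (-n) = 2 ^ n * 2 ^ n := by
    rw [zpow_neg, ← div_eq_mul_inv, ← div_zpow, ← mul_zpow]; norm_num
  have h2 : (-8 : K) ^ n * (-4) ^ (-n) = 2 ^ n := by
    rw [zpow_neg, ← div_eq_mul_inv, ← div_zpow]; norm_num
  rw [zpow_add_one₀ two_ne_zero]
  linear_combination 2 * h4 + h2

end Field

theorem verlinde_C_one_two_general (s : ℂ) (hs : IsPrimitiveRoot s 16)
    (g : ℕ) :
    (-8 : ℂ) ^ ((g : ℤ) - 1) *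
      ∑ l ∈ Finset.Icc 1 3,
        ((s ^ (2 * (l : ℤ)) - s ^ (-(2 * (l : ℤ)))) ^ 2) ^ (1 - (g : ℤ)) =
    2 ^ ((g : ℤ) - 1) * (1 + 2 ^ (g : ℤ)) := by
  have hs8 := hs.pow_eight_eq_neg_one
  have hl1 : (s ^ 2 - (s ^ 2)⁻¹) ^ 2 = -2 :=
    sub_inv_sq_of_pow_four_eq_neg_one (by rw [← pow_mul, hs8])
  have hl2 : (s ^ 4 - (s ^ 4)⁻¹) ^ 2 = -4 :=
    sub_inv_sq_of_sq_eq_neg_one (by rw [← pow_mul, hs8])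
  have hl3 : (s ^ 6 - (s ^ 6)⁻¹) ^ 2 = -2 :=
    sub_inv_sq_of_pow_four_eq_neg_one <| by
      rw [← pow_mul, show 6 * 4 = 8 * 3 from rfl, pow_mul, hs8]; norm_num
  have key := neg_eight_zpow_mul_add_zpow_neg (K := ℂ) ((g : ℤ) - 1)
  rw [neg_sub, sub_add_cancel] at key
  rw [show Finset.Icc (1 : ℤ) 3 = {1, 2, 3} by decide, Finset.sum_insert (by decide),
    Finset.sum_insert (by decide), Finset.sum_singleton]
  simp only [zpow_neg, Int.reduceMul, zpow_ofNat, hl1, hl2, hl3]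
  rw [← key]
  ring

/-- For `s` a primitive 16-th root of unity and `g ≥ 1`, the
genus-`g` Verlinde formula of `C^{1,2}` evaluates to `2^{g-1}(1 + 2^g)`, the
number of spin structures with Arf invariant zero on a genus-`g` surface:
`(-8)^{g-1} ∑_{l=1}^{3} ((s^{2l} - s^{-2l})²)^{1-g} = 2^{g-1}(1 + 2^g)`. -/
theorem verlinde_C_one_two (s : ℂ) (hs : IsPrimitiveRoot s 16)
    (g : ℕ) (hg : 1 ≤ g) :
    (-8 : ℂ) ^ ((g : ℤ) - 1) *
      ∑ l ∈ Finset.Icc 1 3,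
        ((s ^ (2 * (l : ℤ)) - s ^ (-(2 * (l : ℤ)))) ^ 2) ^ (1 - (g : ℤ)) =
    2 ^ ((g : ℤ) - 1) * (1 + 2 ^ (g : ℤ)) :=
  verlinde_C_one_two_general s hs g
end

section
/- Let α and s be nonzero complex numbers with s not a root of unity, and let N ≥ 1 be an integer. For m ≥ 0 let ⟨1^{m+1}⟩_{α,s} = (∏_{j=0}^{m−1} [−j]_α) · ([−m]_α + [m+1]) / [m+1]! denote the quantum dimension of the single-column partition with m+1 cells. If ⟨1^{N+1}⟩_{α,s} = 0 and ⟨1^{m+1}⟩_{α,s} ≠ 0 for every integer m with 0 ≤ m < N, then α = −s^{2N+1} or α = s^{N−1} or α = −s^{N−1}. -/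
open Finset

/-- The quantum dimension of the single-column partition with `m+1` cells:
`⟨1^{m+1}⟩_{α,s} = (∏_{j=0}^{m-1} [-j]_α) · ([-m]_α + [m+1]) / [m+1]!`. -/
noncomputable def colDim (α s : ℂ) (m : ℕ) : ℂ :=
  (∏ j ∈ Finset.range m, qintA α s (-(j : ℤ))) *
    (qintA α s (-(m : ℤ)) + qint s ((m : ℤ) + 1)) /
  ∏ i ∈ Finset.Icc 1 (m + 1), qint s (i : ℤ)

/-!
Since `s` is not a root of unity, the quantum factorial in the denominator of `⟨1^{m+1}⟩` never
vanishes, so `⟨1^{N+1}⟩ = 0` forces a factor of the numerator to vanish. A factor `[-j]_α` with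
`j + 1 < N` would already kill `⟨1^{j+1}⟩`, so `j = N - 1` and `α² = s^{2(N-1)}`. Otherwise
`[-N]_α + [N+1] = 0`, which factors as `(α + s^{2N+1})(α - s⁻¹) = 0`; and `α = s⁻¹` makes
`⟨1^1⟩ = [0]_α + [1]` vanish, which is only allowed for `N = 0`, where `s⁻¹ = s^{N-1}`.
-/

lemma sub_inv_ne_zero_of_sq_ne_one {K : Type*} [Field K] {s : K} (hs : s ≠ 0) (h : s ^ 2 ≠ 1) :
    s - s⁻¹ ≠ 0 := by
  intro h0
  apply h
  field_simp at h0
  linear_combination h0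

lemma qint_natCast_ne_zero {s : ℂ} (hs : s ≠ 0) {k : ℕ} (hk : s ^ (2 * k) ≠ 1) :
    qint s k ≠ 0 := by
  have hsq : s ^ 2 ≠ 1 := fun h => hk (by rw [pow_mul, h, one_pow])
  refine div_ne_zero (fun h0 => hk ?_) (sub_inv_ne_zero_of_sq_ne_one hs hsq)
  rw [zpow_neg, zpow_natCast] at h0
  field_simp at h0
  linear_combination h0

lemma prod_qint_Icc_ne_zero {s : ℂ} (hs : s ≠ 0) (hroot : ∀ m : ℕ, 0 < m → s ^ m ≠ 1) (n : ℕ) :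
    ∏ i ∈ Icc 1 n, qint s (i : ℤ) ≠ 0 :=
  prod_ne_zero_iff.2 fun i hi => qint_natCast_ne_zero hs (hroot _ (by simp at hi; omega))

lemma colDim_eq_zero_iff {α s : ℂ} (hs : s ≠ 0) (hroot : ∀ m : ℕ, 0 < m → s ^ m ≠ 1) (m : ℕ) :
    colDim α s m = 0 ↔ (∃ j < m, qintA α s (-(j : ℤ)) = 0) ∨
      qintA α s (-(m : ℤ)) + qint s ((m : ℤ) + 1) = 0 := by
  rw [colDim, div_eq_zero_iff, or_iff_left (prod_qint_Icc_ne_zero hs hroot _), mul_eq_zero,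
    prod_eq_zero_iff]
  simp only [mem_range]

lemma colDim_succ_eq_zero {α s : ℂ} {j : ℕ} (h : qintA α s (-(j : ℤ)) = 0) :
    colDim α s (j + 1) = 0 := by
  rw [colDim, prod_range_succ, h]
  simp

lemma qintA_eq_zero_iff {α s : ℂ} (hα : α ≠ 0) (hs : s ≠ 0) (hs2 : s ^ 2 ≠ 1) (m : ℤ) :
    qintA α s m = 0 ↔ α = s ^ (-m) ∨ α = -s ^ (-m) := by
  have hsm : s ^ m ≠ 0 := zpow_ne_zero m hs
  have factor : α * s ^ m - α⁻¹ * s ^ (-m) = (α - s ^ (-m)) * (α + s ^ (-m)) * (s ^ m / α) := by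
    rw [zpow_neg]
    field_simp
    ring
  rw [qintA, factor, div_eq_zero_iff, or_iff_left (sub_inv_ne_zero_of_sq_ne_one hs hs2),
    mul_eq_zero, or_iff_left (div_ne_zero hsm hα), mul_eq_zero, sub_eq_zero, add_eq_zero_iff_eq_neg]

lemma qintA_neg_add_qint_eq_zero_iff {α s : ℂ} (hα : α ≠ 0) (hs : s ≠ 0) (hs2 : s ^ 2 ≠ 1)
    (n : ℤ) : qintA α s (-n) + qint s (n + 1) = 0 ↔ α = -s ^ (2 * n + 1) ∨ α = s⁻¹ := by
  have hsn : s ^ n ≠ 0 := zpow_ne_zero n hs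
  have factor : α * s ^ (-n) - α⁻¹ * s ^ (- -n) + (s ^ (n + 1) - s ^ (-(n + 1))) =
      (α + s ^ (2 * n + 1)) * (α - s⁻¹) / (α * s ^ n) := by
    rw [neg_neg, zpow_neg, zpow_neg, zpow_add_one₀ hs, zpow_add_one₀ hs, mul_comm 2 n, zpow_mul,
      zpow_two]
    field_simp
    ring
  rw [qintA, qint, ← add_div, factor, div_div, div_eq_zero_iff,
    or_iff_left (mul_ne_zero (mul_ne_zero hα hsn) (sub_inv_ne_zero_of_sq_ne_one hs hs2)),
    mul_eq_zero, add_eq_zero_iff_eq_neg, sub_eq_zero]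

theorem column_vanishing_classification_general (α s : ℂ) (hα : α ≠ 0) (hs : s ≠ 0)
    (hroot : ∀ m : ℕ, 0 < m → s ^ m ≠ 1) (N : ℕ)
    (hzero : colDim α s N = 0) (hnz : ∀ m : ℕ, m < N → colDim α s m ≠ 0) :
    α = -s ^ (2 * (N : ℤ) + 1) ∨ α = s ^ ((N : ℤ) - 1) ∨ α = -s ^ ((N : ℤ) - 1) := by
  have hs2 : s ^ 2 ≠ 1 := hroot 2 two_pos
  rcases (colDim_eq_zero_iff hs hroot N).1 hzero with ⟨j, hjN, hj⟩ | hlast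
  · have hj_last : (j : ℤ) = N - 1 := by
      by_contra hne
      exact hnz (j + 1) (by omega) (colDim_succ_eq_zero hj)
    rw [qintA_eq_zero_iff hα hs hs2, neg_neg, hj_last] at hj
    exact Or.inr hj
  · rcases (qintA_neg_add_qint_eq_zero_iff hα hs hs2 N).1 hlast with h | h
    · exact Or.inl h
    · rcases N.eq_zero_or_pos with rfl | hN
      · exact Or.inr (Or.inl (by simpa using h))
      · refine absurd ((colDim_eq_zero_iff hs hroot 0).2 (Or.inr ?_)) (hnz 0 hN)
        exact (qintA_neg_add_qint_eq_zero_iff hα hs hs2 0).2 (Or.inr h)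

/-- If the column of `N+1` cells is the smallest column with
vanishing quantum dimension, then `α = -s^{2N+1}` or `α = ±s^{N-1}`. -/
theorem column_vanishing_classification (α s : ℂ) (hα : α ≠ 0) (hs : s ≠ 0)
    (hroot : ∀ m : ℕ, 0 < m → s ^ m ≠ 1) (N : ℕ) (hN : 1 ≤ N)
    (hzero : colDim α s N = 0) (hnz : ∀ m : ℕ, m < N → colDim α s m ≠ 0) :
    α = -s ^ (2 * (N : ℤ) + 1) ∨ α = s ^ ((N : ℤ) - 1) ∨ α = -s ^ ((N : ℤ) - 1) :=
  column_vanishing_classification_general α s hα hs hroot N hzero hnz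
end
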